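/- arXiv:2005.10881 — 7 statements merged into one kernel-verified Lean document; each statement's English description precedes it below -/
import Mathlib

section
/- Let ε ≥ 0 and δ ∈ [0,1], and let P and Q be probability measures on a measurable space satisfying (ε,δ)-indistinguishability. Then for every measurable set E (viewed as the rejection region of a hypothesis test with type I error α = P(E) and type II error β = 1 − Q(E)), one has 1 − Q(E) ≥ f_{ε,δ}(P(E)), i.e. β ≥ max{0, 1 − δ − e^ε·α, e^{−ε}·(1 − δ − α)}, where probabilities are taken as real numbers. -/
open MeasureTheory Real

/-- The trade-off function `f_{ε,δ}` for `(ε,δ)`-differential privacy. -/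
noncomputable def fDP (ε δ α : ℝ) : ℝ :=
  max 0 (max (1 - δ - Real.exp ε * α) (Real.exp (-ε) * (1 - δ - α)))

theorem fDP_le_of_bounds {ε δ α β : ℝ} (hβ : 0 ≤ β)
    (h_rej : 1 - β ≤ exp ε * α + δ) (h_acc : 1 - α ≤ exp ε * β + δ) :
    fDP ε δ α ≤ β := by
  refine max_le hβ (max_le (by linarith) ?_)
  rw [exp_neg, ← div_eq_inv_mul, div_le_iff₀ (exp_pos ε)]
  linarith

theorem stmt_0_general {Ω : Type*} [MeasurableSpace Ω] (ε δ : ℝ)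
    (P Q : Measure Ω) [IsProbabilityMeasure P] [IsProbabilityMeasure Q]
    (hindist : ∀ O : Set Ω, MeasurableSet O →
      (P O).toReal ≤ Real.exp ε * (Q O).toReal + δ ∧
      (Q O).toReal ≤ Real.exp ε * (P O).toReal + δ) :
    ∀ E : Set Ω, MeasurableSet E →
      1 - (Q E).toReal ≥ fDP ε δ ((P E).toReal) := by
  intro E hE
  have h_acc : P.real Eᶜ ≤ exp ε * Q.real Eᶜ + δ := (hindist Eᶜ hE.compl).1
  rw [probReal_compl_eq_one_sub hE, probReal_compl_eq_one_sub hE] at h_acc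
  refine fDP_le_of_bounds (sub_nonneg.2 measureReal_le_one) ?_ h_acc
  rw [sub_sub_cancel]
  exact (hindist E hE).2

theorem stmt_0 {Ω : Type*} [MeasurableSpace Ω] (ε δ : ℝ) (hε : 0 ≤ ε)
    (hδ : δ ∈ Set.Icc (0 : ℝ) 1)
    (P Q : Measure Ω) [IsProbabilityMeasure P] [IsProbabilityMeasure Q]
    (hindist : ∀ O : Set Ω, MeasurableSet O →
      (P O).toReal ≤ Real.exp ε * (Q O).toReal + δ ∧
      (Q O).toReal ≤ Real.exp ε * (P O).toReal + δ) :
    ∀ E : Set Ω, MeasurableSet E →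
      1 - (Q E).toReal ≥ fDP ε δ ((P E).toReal) :=
  stmt_0_general ε δ P Q hindist
end

section
/- Let ε ≥ 0 and δ ∈ [0,1], and let P and Q be probability measures on a measurable space satisfying (ε,δ)-indistinguishability, where P is the distribution of the adversary's observation for members and Q for non-members. Then for every measurable set E (the region on which the adversary predicts 'member'), with true positive rate TPR = P(E) and false positive rate α = Q(E), the membership advantage satisfies TPR − α ≤ 1 − f_{ε,δ}(α) − α. -/
/-! The three branches of `fDP ε δ α` are bounded by `1 - P(E)`: the constant `0` trivially, the
second by indistinguishability on `E`, and the third by indistinguishability on `Eᶜ`, divided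
by `e^ε`. -/

open MeasureTheory Real

lemma fDP_le_one_sub {ε δ α p : ℝ} (hp : p ≤ 1) (hpα : p ≤ exp ε * α + δ)
    (hαp : 1 - α ≤ exp ε * (1 - p) + δ) : fDP ε δ α ≤ 1 - p := by
  have hthird : exp (-ε) * (1 - δ - α) ≤ 1 - p := by
    rw [exp_neg, inv_mul_le_iff₀ (exp_pos ε)]
    linarith
  exact max_le (by linarith) (max_le (by linarith) hthird)

theorem stmt_1_general {Ω : Type*} [MeasurableSpace Ω] (ε δ : ℝ)
    (P Q : Measure Ω) [IsProbabilityMeasure P] [IsProbabilityMeasure Q]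
    (hindist : ∀ O : Set Ω, MeasurableSet O →
      (P O).toReal ≤ Real.exp ε * (Q O).toReal + δ ∧
      (Q O).toReal ≤ Real.exp ε * (P O).toReal + δ) :
    ∀ E : Set Ω, MeasurableSet E →
      (P E).toReal - (Q E).toReal ≤ 1 - fDP ε δ ((Q E).toReal) - (Q E).toReal := by
  intro E hE
  have hPc : (P Eᶜ).toReal = 1 - (P E).toReal := probReal_compl_eq_one_sub hE
  have hQc : (Q Eᶜ).toReal = 1 - (Q E).toReal := probReal_compl_eq_one_sub hE
  have hcompl := (hindist Eᶜ hE.compl).2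
  rw [hPc, hQc] at hcompl
  have key : fDP ε δ (Q E).toReal ≤ 1 - (P E).toReal :=
    fDP_le_one_sub measureReal_le_one (hindist E hE).1 hcompl
  linarith

theorem stmt_1 {Ω : Type*} [MeasurableSpace Ω] (ε δ : ℝ) (hε : 0 ≤ ε)
    (hδ : δ ∈ Set.Icc (0 : ℝ) 1)
    (P Q : Measure Ω) [IsProbabilityMeasure P] [IsProbabilityMeasure Q]
    (hindist : ∀ O : Set Ω, MeasurableSet O →
      (P O).toReal ≤ Real.exp ε * (Q O).toReal + δ ∧
      (Q O).toReal ≤ Real.exp ε * (P O).toReal + δ) :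
    ∀ E : Set Ω, MeasurableSet E →
      (P E).toReal - (Q E).toReal ≤ 1 - fDP ε δ ((Q E).toReal) - (Q E).toReal :=
  stmt_1_general ε δ P Q hindist
end

section
/- Let ε ≥ 0, δ ∈ [0,1], γ > 0, and let P and Q be probability measures on a measurable space satisfying (ε,δ)-indistinguishability, where P is the distribution of the adversary's observation for members and Q for non-members. Then for every measurable set E (the region on which the adversary predicts 'member') with P(E) + γ·Q(E) > 0, setting α = Q(E), the positive predictive value satisfies P(E) / (P(E) + γ·Q(E)) ≤ (1 − f_{ε,δ}(α)) / (1 − f_{ε,δ}(α) + γ·α). -/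
/-!
An attacker who flags a set `E` with `P(E) = β` and `Q(E) = α` is a test between `Q` and `P`
with type I error `α` and type II error `1 - β`. Applying indistinguishability to `E` and
to `Eᶜ` shows that `1 - β` dominates the trade-off function `f_{ε,δ}(α)`, i.e.
`β ≤ 1 - f_{ε,δ}(α)`; the precision `β / (β + γ α)` is increasing in `β`.
-/

open MeasureTheory Real

lemma div_add_le_div_add_of_le {a b c : ℝ} (hab : a ≤ b) (hc : 0 ≤ c) (ha : 0 < a + c) :
    a / (a + c) ≤ b / (b + c) := by
  rw [div_le_div_iff₀ ha (by linarith)]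
  nlinarith

lemma le_one_sub_fDP {ε δ α β : ℝ} (hβ : β ≤ 1) (hE : β ≤ exp ε * α + δ)
    (hEc : 1 - α ≤ exp ε * (1 - β) + δ) : β ≤ 1 - fDP ε δ α := by
  have hcompl : exp (-ε) * (1 - δ - α) ≤ 1 - β := by
    rw [exp_neg, inv_mul_le_iff₀ (exp_pos ε)]
    linarith
  have : fDP ε δ α ≤ 1 - β := max_le (by linarith) (max_le (by linarith) hcompl)
  linarith

lemma measureReal_le_one_sub_fDP {Ω : Type*} [MeasurableSpace Ω] {ε δ : ℝ}
    {P Q : Measure Ω} [IsProbabilityMeasure P] [IsProbabilityMeasure Q]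
    (hindist : ∀ O : Set Ω, MeasurableSet O →
      P.real O ≤ exp ε * Q.real O + δ ∧ Q.real O ≤ exp ε * P.real O + δ)
    {E : Set Ω} (hE : MeasurableSet E) : P.real E ≤ 1 - fDP ε δ (Q.real E) := by
  have hEc := (hindist Eᶜ hE.compl).2
  rw [probReal_compl_eq_one_sub hE, probReal_compl_eq_one_sub hE] at hEc
  exact le_one_sub_fDP measureReal_le_one (hindist E hE).1 hEc

theorem stmt_2_general {Ω : Type*} [MeasurableSpace Ω] (ε δ γ : ℝ) (hγ : 0 < γ)
    (P Q : Measure Ω) [IsProbabilityMeasure P] [IsProbabilityMeasure Q]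
    (hindist : ∀ O : Set Ω, MeasurableSet O →
      (P O).toReal ≤ Real.exp ε * (Q O).toReal + δ ∧
      (Q O).toReal ≤ Real.exp ε * (P O).toReal + δ) :
    ∀ E : Set Ω, MeasurableSet E → 0 < (P E).toReal + γ * (Q E).toReal →
      (P E).toReal / ((P E).toReal + γ * (Q E).toReal) ≤
        (1 - fDP ε δ ((Q E).toReal)) /
          (1 - fDP ε δ ((Q E).toReal) + γ * (Q E).toReal) := by
  intro E hE hpos
  exact div_add_le_div_add_of_le (measureReal_le_one_sub_fDP hindist hE)
    (mul_nonneg hγ.le measureReal_nonneg) hpos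

theorem stmt_2 {Ω : Type*} [MeasurableSpace Ω] (ε δ γ : ℝ) (hε : 0 ≤ ε)
    (hδ : δ ∈ Set.Icc (0 : ℝ) 1) (hγ : 0 < γ)
    (P Q : Measure Ω) [IsProbabilityMeasure P] [IsProbabilityMeasure Q]
    (hindist : ∀ O : Set Ω, MeasurableSet O →
      (P O).toReal ≤ Real.exp ε * (Q O).toReal + δ ∧
      (Q O).toReal ≤ Real.exp ε * (P O).toReal + δ) :
    ∀ E : Set Ω, MeasurableSet E → 0 < (P E).toReal + γ * (Q E).toReal →
      (P E).toReal / ((P E).toReal + γ * (Q E).toReal) ≤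
        (1 - fDP ε δ ((Q E).toReal)) /
          (1 - fDP ε δ ((Q E).toReal) + γ * (Q E).toReal) :=
  stmt_2_general ε δ γ hγ P Q hindist
end

section
/- For every ε ≥ 0, the maximum over α ∈ [0,1] of the membership advantage bound 1 − f_{ε,0}(α) − α equals (e^ε − 1)/(e^ε + 1), and this maximum is attained at α = 1/(1 + e^ε); in particular, for every α ∈ [0,1] one has 1 − f_{ε,0}(α) − α ≤ e^ε − 1, so the bound of Theorem 4.2 is at least as tight as Yeom et al.'s bound e^ε − 1. -/
open Real

/-! With `E = exp ε`, the two linear pieces of `f_{ε,δ}` give `1 - f(α) - α ≤ δ + (E - 1) α` and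
`E (1 - f(α) - α) ≤ δ + (E - 1)(1 - α)`. Adding them eliminates `α`, so
`(E + 1)(1 - f(α) - α) ≤ E - 1 + 2δ` for every `α`; equality holds where the two pieces cross,
at `α = (1 - δ) / (1 + E)`. -/

theorem le_fDP_left (ε δ α : ℝ) : 1 - δ - exp ε * α ≤ fDP ε δ α :=
  le_max_of_le_right (le_max_left _ _)

theorem le_fDP_right (ε δ α : ℝ) : exp (-ε) * (1 - δ - α) ≤ fDP ε δ α :=
  le_max_of_le_right (le_max_right _ _)

theorem one_sub_fDP_sub_le (ε δ α : ℝ) :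
    1 - fDP ε δ α - α ≤ (exp ε - 1 + 2 * δ) / (exp ε + 1) := by
  have hE : 0 < exp ε := exp_pos ε
  have hleft := le_fDP_left ε δ α
  have hright : 1 - δ - α ≤ exp ε * fDP ε δ α := by
    have := mul_le_mul_of_nonneg_left (le_fDP_right ε δ α) hE.le
    rwa [← mul_assoc, ← exp_add, add_neg_cancel, exp_zero, one_mul] at this
  rw [le_div_iff₀ (by linarith)]
  linarith

theorem fDP_at_crossing (ε δ : ℝ) (hδ : δ ≤ 1) :
    fDP ε δ ((1 - δ) / (1 + exp ε)) = (1 - δ) / (1 + exp ε) := by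
  have hE : 0 < exp ε := exp_pos ε
  have hleft : 1 - δ - exp ε * ((1 - δ) / (1 + exp ε)) = (1 - δ) / (1 + exp ε) := by
    field_simp
    ring
  have hright : exp (-ε) * (1 - δ - (1 - δ) / (1 + exp ε)) = (1 - δ) / (1 + exp ε) := by
    rw [exp_neg]
    field_simp
    ring
  rw [fDP, hleft, hright, max_self, max_eq_right (by apply div_nonneg <;> linarith)]

theorem one_sub_fDP_sub_at_crossing (ε δ : ℝ) (hδ : δ ≤ 1) :
    1 - fDP ε δ ((1 - δ) / (1 + exp ε)) - (1 - δ) / (1 + exp ε) =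
      (exp ε - 1 + 2 * δ) / (exp ε + 1) := by
  have hE : 0 < exp ε := exp_pos ε
  rw [fDP_at_crossing ε δ hδ]
  field_simp
  ring

theorem stmt_4 (ε : ℝ) (hε : 0 ≤ ε) :
    (∀ α ∈ Set.Icc (0 : ℝ) 1,
      1 - fDP ε 0 α - α ≤ (Real.exp ε - 1) / (Real.exp ε + 1)) ∧
    (1 / (1 + Real.exp ε) ∈ Set.Icc (0 : ℝ) 1 ∧
      1 - fDP ε 0 (1 / (1 + Real.exp ε)) - 1 / (1 + Real.exp ε) =
        (Real.exp ε - 1) / (Real.exp ε + 1)) ∧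
    (∀ α ∈ Set.Icc (0 : ℝ) 1, 1 - fDP ε 0 α - α ≤ Real.exp ε - 1) := by
  have hE : 1 ≤ exp ε := one_le_exp hε
  have hbound (α : ℝ) : 1 - fDP ε 0 α - α ≤ (exp ε - 1) / (exp ε + 1) := by
    simpa using one_sub_fDP_sub_le ε 0 α
  have hcrossing_mem : 1 / (1 + exp ε) ∈ Set.Icc (0 : ℝ) 1 :=
    ⟨by positivity, (div_le_one (by positivity)).2 (by linarith)⟩
  have hratio_le : (exp ε - 1) / (exp ε + 1) ≤ exp ε - 1 :=
    div_le_self (by linarith) (by linarith)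
  refine ⟨fun α _ ↦ hbound α, ⟨hcrossing_mem, ?_⟩, fun α _ ↦ (hbound α).trans hratio_le⟩
  simpa using one_sub_fDP_sub_at_crossing ε 0 zero_le_one
end

section
/- Let Δ > 0 and μ > 0, set σ = Δ/μ, and let a, b ∈ ℝ with |a − b| ≤ Δ. Let α ∈ (0,1) and t ∈ ℝ with Φ(t) = 1 − α. Then for every measurable set E ⊆ ℝ with N(a, σ²)(E) ≤ α, one has N(b, σ²)(ℝ \ E) ≥ Φ(t − μ). (Hence a mechanism releasing θ(S) + ζ with ζ ∼ N(0, Δ²/μ²), where Δ is the global sensitivity of θ, is μ-Gaussian differentially private.) -/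
open MeasureTheory ProbabilityTheory Real

/-- The cumulative distribution function of the standard Gaussian `N(0,1)`. -/
noncomputable def stdGaussCDF (x : ℝ) : ℝ :=
  ProbabilityTheory.cdf (ProbabilityTheory.gaussianReal 0 1) x

/-!
Standardising by `x ↦ ±(x - a) / σ` (the sign chosen so that the shifted mean is nonnegative)
reduces the claim to the pair `N(0,1)`, `N(c,1)` with `0 ≤ c ≤ μ`. Their likelihood ratio
`exp (c x - c² / 2)` is increasing, so by the Neyman–Pearson argument, among the sets of
`N(0,1)`-mass at least `1 - α = Φ t`, the half-line `Iic t` has the least `N(c,1)`-mass,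
namely `Φ (t - c) ≥ Φ (t - μ)`.
-/

open Set ENNReal

theorem measure_le_measure_of_neymanPearson {Ω : Type*} [MeasurableSpace Ω] {P Q : Measure Ω}
    [IsFiniteMeasure P] {L F : Set Ω} (hL : MeasurableSet L) (hF : MeasurableSet F) {k : ℝ≥0∞}
    (h_in : ∀ s ⊆ L, MeasurableSet s → Q s ≤ k * P s)
    (h_out : ∀ s ⊆ Lᶜ, MeasurableSet s → k * P s ≤ Q s) (hPLF : P L ≤ P F) :
    Q L ≤ Q F := by
  have hP_diff : P (L \ F) ≤ P (F \ L) := by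
    rw [← measure_inter_add_sdiff L hF, ← measure_inter_add_sdiff F hL, inter_comm] at hPLF
    exact (ENNReal.add_le_add_iff_left (measure_ne_top P _)).mp hPLF
  calc Q L = Q (L ∩ F) + Q (L \ F) := (measure_inter_add_sdiff L hF).symm
    _ ≤ Q (F ∩ L) + Q (F \ L) := by
      rw [inter_comm]
      gcongr Q _ + ?_
      calc Q (L \ F) ≤ k * P (L \ F) := h_in _ sdiff_subset (hL.diff hF)
        _ ≤ k * P (F \ L) := by gcongr
        _ ≤ Q (F \ L) := h_out _ (fun x hx => hx.2) (hF.diff hL)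
    _ = Q F := measure_inter_add_sdiff F hL

theorem gaussianPDF_one_eq_exp_mul (c x : ℝ) :
    gaussianPDF c 1 x = ENNReal.ofReal (rexp (c * x - c ^ 2 / 2)) * gaussianPDF 0 1 x := by
  rw [gaussianPDF, gaussianPDF, ← ENNReal.ofReal_mul (exp_nonneg _)]
  simp only [gaussianPDFReal, NNReal.coe_one, mul_one, sub_zero]
  rw [mul_left_comm, ← exp_add]
  ring_nf

theorem gaussianReal_le_exp_mul_of_subset_Iic {c t : ℝ} (hc : 0 ≤ c) {s : Set ℝ}
    (hs : s ⊆ Iic t) :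
    gaussianReal c 1 s ≤ ENNReal.ofReal (rexp (c * t - c ^ 2 / 2)) * gaussianReal 0 1 s := by
  rw [gaussianReal_apply _ one_ne_zero, gaussianReal_apply _ one_ne_zero,
    ← lintegral_const_mul _ (measurable_gaussianPDF 0 1)]
  refine setLIntegral_mono ((measurable_gaussianPDF 0 1).const_mul _) fun x hx => ?_
  rw [gaussianPDF_one_eq_exp_mul c x]
  gcongr
  exact hs hx

theorem exp_mul_le_gaussianReal_of_subset_compl_Iic {c t : ℝ} (hc : 0 ≤ c) {s : Set ℝ}
    (hs : s ⊆ (Iic t)ᶜ) :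
    ENNReal.ofReal (rexp (c * t - c ^ 2 / 2)) * gaussianReal 0 1 s ≤ gaussianReal c 1 s := by
  rw [gaussianReal_apply _ one_ne_zero, gaussianReal_apply _ one_ne_zero,
    ← lintegral_const_mul _ (measurable_gaussianPDF 0 1)]
  refine setLIntegral_mono (measurable_gaussianPDF c 1) fun x hx => ?_
  rw [gaussianPDF_one_eq_exp_mul c x]
  gcongr
  exact (notMem_Iic.mp (hs hx)).le

theorem gaussianReal_Iic_eq_stdGaussCDF (c t : ℝ) :
    gaussianReal c 1 (Iic t) = ENNReal.ofReal (stdGaussCDF (t - c)) := by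
  rw [stdGaussCDF, ofReal_cdf, ← zero_add c, ← gaussianReal_map_add_const,
    Measure.map_apply (measurable_add_const c) measurableSet_Iic]
  congr 1
  ext x
  simp [le_sub_iff_add_le]

theorem stdGaussCDF_sub_le_gaussianReal_compl {c t : ℝ} (hc : 0 ≤ c) {E : Set ℝ}
    (hE : MeasurableSet E) (hPE : (gaussianReal 0 1 E).toReal ≤ 1 - stdGaussCDF t) :
    stdGaussCDF (t - c) ≤ (gaussianReal c 1 Eᶜ).toReal := by
  have hP : gaussianReal 0 1 (Iic t) ≤ gaussianReal 0 1 Eᶜ := by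
    rw [← ofReal_toReal (measure_ne_top _ Eᶜ), gaussianReal_Iic_eq_stdGaussCDF, sub_zero]
    refine ENNReal.ofReal_le_ofReal ?_
    rw [← measureReal_def, probReal_compl_eq_one_sub hE, measureReal_def]
    linarith
  have hQ := measure_le_measure_of_neymanPearson measurableSet_Iic hE.compl
    (fun s hs _ => gaussianReal_le_exp_mul_of_subset_Iic hc hs)
    (fun s hs _ => exp_mul_le_gaussianReal_of_subset_compl_Iic hc hs) hP
  rw [gaussianReal_Iic_eq_stdGaussCDF] at hQ
  exact (ENNReal.ofReal_le_iff_le_toReal (measure_ne_top _ _)).mp hQ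

theorem gaussianReal_map_standardize {σ : ℝ} (hσ : σ ≠ 0) (a m : ℝ) :
    (gaussianReal m (σ ^ 2).toNNReal).map (fun x => (x - a) / σ) =
      gaussianReal ((m - a) / σ) 1 := by
  rw [show (fun x => (x - a) / σ) = (· / σ) ∘ (· - a) from rfl,
    ← Measure.map_map (measurable_div_const σ) (measurable_sub_const a),
    gaussianReal_map_sub_const, gaussianReal_map_div_const]
  congr
  rw [← NNReal.coe_inj]
  simp [max_eq_left (sq_nonneg σ), hσ]

theorem gaussianReal_apply_eq_standardized {σ : ℝ} (hσ : σ ≠ 0) (a m : ℝ) {E : Set ℝ}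
    (hE : MeasurableSet E) :
    gaussianReal m (σ ^ 2).toNNReal E =
      gaussianReal ((m - a) / σ) 1 ((fun y => σ * y + a) ⁻¹' E) := by
  rw [← gaussianReal_map_standardize hσ a m,
    Measure.map_apply (by fun_prop) (hE.preimage (by fun_prop))]
  congr 1
  ext x
  simp [mul_div_cancel₀ _ hσ]

theorem stmt_10_general (Δ μ a b α t : ℝ) (hΔ : 0 < Δ) (hμ : 0 < μ)
    (hab : |a - b| ≤ Δ) (ht : stdGaussCDF t = 1 - α) :
    ∀ E : Set ℝ, MeasurableSet E →
      (gaussianReal a (Real.toNNReal ((Δ / μ) ^ 2)) E).toReal ≤ α →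
      (gaussianReal b (Real.toNNReal ((Δ / μ) ^ 2)) Eᶜ).toReal ≥
        stdGaussCDF (t - μ) := by
  intro E hE hPE
  obtain ⟨σ, hσ, hσ_sq, hc⟩ :
      ∃ σ : ℝ, σ ≠ 0 ∧ σ ^ 2 = (Δ / μ) ^ 2 ∧ (b - a) / σ = |b - a| / (Δ / μ) := by
    rcases le_total a b with h | h
    · exact ⟨Δ / μ, by positivity, rfl, by rw [abs_of_nonneg (sub_nonneg.2 h)]⟩
    · exact ⟨-(Δ / μ), neg_ne_zero.2 (by positivity), by ring,
        by rw [abs_of_nonpos (sub_nonpos.2 h), div_neg, neg_div]⟩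
  rw [← hσ_sq, gaussianReal_apply_eq_standardized hσ a a hE, sub_self, zero_div] at hPE
  rw [← hσ_sq, gaussianReal_apply_eq_standardized hσ a b hE.compl, preimage_compl, hc, ge_iff_le]
  have hshift : |b - a| / (Δ / μ) ≤ μ := by
    rw [div_le_iff₀ (by positivity), abs_sub_comm]
    field_simp
    linarith
  calc stdGaussCDF (t - μ) ≤ stdGaussCDF (t - |b - a| / (Δ / μ)) :=
        monotone_cdf _ (by linarith)
    _ ≤ _ := stdGaussCDF_sub_le_gaussianReal_compl (by positivity)
        (hE.preimage (by fun_prop)) (by linarith)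

theorem stmt_10 (Δ μ a b α t : ℝ) (hΔ : 0 < Δ) (hμ : 0 < μ)
    (hab : |a - b| ≤ Δ) (hα : α ∈ Set.Ioo (0 : ℝ) 1)
    (ht : stdGaussCDF t = 1 - α) :
    ∀ E : Set ℝ, MeasurableSet E →
      (gaussianReal a (Real.toNNReal ((Δ / μ) ^ 2)) E).toReal ≤ α →
      (gaussianReal b (Real.toNNReal ((Δ / μ) ^ 2)) Eᶜ).toReal ≥
        stdGaussCDF (t - μ) :=
  stmt_10_general Δ μ a b α t hΔ hμ hab ht
end

section
/- Let μ > 0 and ε ≥ 0, and define δ_μ(ε) = Φ(−ε/μ + μ/2) − e^ε·Φ(−ε/μ − μ/2). Then for every measurable set O ⊆ ℝ, both N(μ,1)(O) ≤ e^ε·N(0,1)(O) + δ_μ(ε) and N(0,1)(O) ≤ e^ε·N(μ,1)(O) + δ_μ(ε); that is, the pair (N(0,1), N(μ,1)) satisfies (ε, δ_μ(ε))-indistinguishability for every ε ≥ 0. -/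
open MeasureTheory ProbabilityTheory Real

/-!
Neyman–Pearson argument. Writing `p_m` for the density of `N(m,1)`, for every `c` and every
measurable `O` one has `N(0,1)(O) - c N(μ,1)(O) = ∫_O (p_0 - c p_μ) ≤ ∫_S (p_0 - c p_μ)`, where
`S = {p_0 ≥ c p_μ}`. Since `p_μ / p_0 = exp (μ x - μ² / 2)`, for `c = e^ε` the set `S` is the
half-line `x ≤ -ε/μ + μ/2`, on which both measures are values of `Φ`. The other inequality follows
by the reflection `x ↦ μ - x`, which exchanges `N(0,1)` and `N(μ,1)`.
-/

open Set

noncomputable def gaussianPrivacyDelta (μ ε : ℝ) : ℝ :=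
  stdGaussCDF (-ε / μ + μ / 2) - exp ε * stdGaussCDF (-ε / μ - μ / 2)

lemma setIntegral_le_setIntegral_of_nonneg_of_nonpos_compl {α : Type*} [MeasurableSpace α]
    {ν : Measure α} {f : α → ℝ} (hf : Integrable f ν) {S O : Set α} (hS : MeasurableSet S)
    (hO : MeasurableSet O) (h_nonneg : ∀ x ∈ S, 0 ≤ f x) (h_nonpos : ∀ x ∉ S, f x ≤ 0) :
    ∫ x in O, f x ∂ν ≤ ∫ x in S, f x ∂ν := by
  rw [← integral_indicator hO, ← integral_indicator hS]
  refine integral_mono (hf.indicator hO) (hf.indicator hS) fun x => ?_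
  by_cases hxS : x ∈ S <;> by_cases hxO : x ∈ O <;>
    simp [hxS, hxO, h_nonneg, h_nonpos]

namespace ProbabilityTheory

variable {v : NNReal}

lemma gaussianReal_toReal_eq_integral (m : ℝ) (hv : v ≠ 0) (s : Set ℝ) :
    (gaussianReal m v s).toReal = ∫ x in s, gaussianPDFReal m v x := by
  rw [gaussianReal_apply_eq_integral m hv s,
    ENNReal.toReal_ofReal (integral_nonneg fun x => gaussianPDFReal_nonneg _ _ _)]

lemma gaussianReal_Iic_toReal (m x : ℝ) :
    (gaussianReal m 1 (Iic x)).toReal = stdGaussCDF (x - m) := by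
  have hmap : (gaussianReal 0 1).map (· + m) = gaussianReal m 1 := by
    simpa using gaussianReal_map_add_const (μ := 0) (v := 1) m
  rw [← hmap, Measure.map_apply (measurable_add_const m) measurableSet_Iic,
    stdGaussCDF, cdf_eq_real, measureReal_def]
  congr 2
  ext y
  simp [le_sub_iff_add_le]

lemma gaussianReal_preimage_const_sub (m y : ℝ) {O : Set ℝ} (hO : MeasurableSet O) :
    gaussianReal m v ((y - ·) ⁻¹' O) = gaussianReal (y - m) v O := by
  rw [← Measure.map_apply (measurable_const_sub y) hO, gaussianReal_map_const_sub]

lemma gaussianReal_toReal_le_of_pdf_ratio {m₁ m₂ : ℝ} {v₁ v₂ : NNReal} (hv₁ : v₁ ≠ 0)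
    (hv₂ : v₂ ≠ 0) (c : ℝ) {S O : Set ℝ} (hS : MeasurableSet S) (hO : MeasurableSet O)
    (h_in : ∀ x ∈ S, c * gaussianPDFReal m₂ v₂ x ≤ gaussianPDFReal m₁ v₁ x)
    (h_out : ∀ x ∉ S, gaussianPDFReal m₁ v₁ x ≤ c * gaussianPDFReal m₂ v₂ x) :
    (gaussianReal m₁ v₁ O).toReal ≤ c * (gaussianReal m₂ v₂ O).toReal +
      ((gaussianReal m₁ v₁ S).toReal - c * (gaussianReal m₂ v₂ S).toReal) := by
  have hint₁ := integrable_gaussianPDFReal m₁ v₁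
  have hint₂ := (integrable_gaussianPDFReal m₂ v₂).const_mul c
  have h_diff : ∀ A : Set ℝ, ∫ x in A, (gaussianPDFReal m₁ v₁ x - c * gaussianPDFReal m₂ v₂ x)
      = (gaussianReal m₁ v₁ A).toReal - c * (gaussianReal m₂ v₂ A).toReal := fun A => by
    rw [integral_sub hint₁.integrableOn hint₂.integrableOn, integral_const_mul,
      gaussianReal_toReal_eq_integral m₁ hv₁, gaussianReal_toReal_eq_integral m₂ hv₂]
  have h := setIntegral_le_setIntegral_of_nonneg_of_nonpos_compl (hint₁.sub hint₂) hS hO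
    (f := fun x => gaussianPDFReal m₁ v₁ x - c * gaussianPDFReal m₂ v₂ x)
    (fun x hx => sub_nonneg.2 (h_in x hx)) (fun x hx => sub_nonpos.2 (h_out x hx))
  rw [h_diff, h_diff] at h
  linarith

lemma gaussianPDFReal_eq_exp_mul (m x : ℝ) :
    gaussianPDFReal m 1 x = exp (m * x - m ^ 2 / 2) * gaussianPDFReal 0 1 x := by
  simp only [gaussianPDFReal, NNReal.coe_one, mul_one, sub_zero]
  rw [mul_left_comm, ← exp_add]
  ring_nf

lemma exp_mul_gaussianPDFReal_le_iff {μ : ℝ} (hμ : 0 < μ) (ε x : ℝ) :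
    exp ε * gaussianPDFReal μ 1 x ≤ gaussianPDFReal 0 1 x ↔ x ≤ -ε / μ + μ / 2 := by
  rw [gaussianPDFReal_eq_exp_mul, ← mul_assoc, ← exp_add,
    mul_le_iff_le_one_left (gaussianPDFReal_pos 0 1 x one_ne_zero), exp_le_one_iff,
    show -ε / μ + μ / 2 = (μ ^ 2 / 2 - ε) / μ by field_simp; ring, le_div_iff₀ hμ]
  constructor <;> intro h <;> linarith

lemma gaussianReal_zero_toReal_le (μ ε : ℝ) (hμ : 0 < μ) {O : Set ℝ} (hO : MeasurableSet O) :
    (gaussianReal 0 1 O).toReal ≤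
      exp ε * (gaussianReal μ 1 O).toReal + gaussianPrivacyDelta μ ε := by
  have h := gaussianReal_toReal_le_of_pdf_ratio one_ne_zero one_ne_zero (exp ε)
    (measurableSet_Iic (a := -ε / μ + μ / 2)) hO
    (fun x hx => (exp_mul_gaussianPDFReal_le_iff hμ ε x).2 hx)
    (fun x hx => (not_le.1 (mt (exp_mul_gaussianPDFReal_le_iff hμ ε x).1 hx)).le)
  rwa [gaussianReal_Iic_toReal, gaussianReal_Iic_toReal, sub_zero,
    show -ε / μ + μ / 2 - μ = -ε / μ - μ / 2 by ring] at h

end ProbabilityTheory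

theorem stmt_11_general (μ ε : ℝ) (hμ : 0 < μ) :
    ∀ O : Set ℝ, MeasurableSet O →
      (gaussianReal μ 1 O).toReal ≤ Real.exp ε * (gaussianReal 0 1 O).toReal +
        (stdGaussCDF (-ε / μ + μ / 2) - Real.exp ε * stdGaussCDF (-ε / μ - μ / 2)) ∧
      (gaussianReal 0 1 O).toReal ≤ Real.exp ε * (gaussianReal μ 1 O).toReal +
        (stdGaussCDF (-ε / μ + μ / 2) - Real.exp ε * stdGaussCDF (-ε / μ - μ / 2)) := by
  intro O hO
  have h_reflect := gaussianReal_zero_toReal_le μ ε hμ (measurable_const_sub μ hO)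
  rw [gaussianReal_preimage_const_sub 0 μ hO, gaussianReal_preimage_const_sub μ μ hO, sub_zero,
    sub_self] at h_reflect
  exact ⟨h_reflect, gaussianReal_zero_toReal_le μ ε hμ hO⟩

theorem stmt_11 (μ ε : ℝ) (hμ : 0 < μ) (hε : 0 ≤ ε) :
    ∀ O : Set ℝ, MeasurableSet O →
      (gaussianReal μ 1 O).toReal ≤ Real.exp ε * (gaussianReal 0 1 O).toReal +
        (stdGaussCDF (-ε / μ + μ / 2) - Real.exp ε * stdGaussCDF (-ε / μ - μ / 2)) ∧
      (gaussianReal 0 1 O).toReal ≤ Real.exp ε * (gaussianReal μ 1 O).toReal +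
        (stdGaussCDF (-ε / μ + μ / 2) - Real.exp ε * stdGaussCDF (-ε / μ - μ / 2)) :=
  stmt_11_general μ ε hμ
end

section
/- Let T be a natural number and μ : Fin T → ℝ. Let P be the product measure on ℝ^T of T copies of N(0,1), and let Q be the product measure whose i-th factor is N(μ_i, 1). Let α ∈ (0,1) and t ∈ ℝ with Φ(t) = 1 − α. Then for every measurable set E ⊆ ℝ^T with P(E) ≤ α, one has Q(complement of E) ≥ Φ(t − √(Σ_i μ_i²)); that is, the T-fold composition of μ_i-GDP Gaussian mechanisms is √(μ_1² + ⋯ + μ_T²)-GDP. -/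
open MeasureTheory ProbabilityTheory Real

/-!
Write `s = ∑ i, μ i ^ 2` and `S x = ∑ i, μ i * x i`. Under `P` the statistic `S` has law `N(0, s)`,
under `Q` it has law `N(s, s)`, and the likelihood ratio `dQ/dP = exp (S - s / 2)` is an
increasing function of `S`. By the Neyman–Pearson lemma the threshold set `A = {S ≤ t √s}`, whose
`P`-measure is `Φ t = 1 - α`, has the least `Q`-measure among all sets of `P`-measure at least
`1 - α`. Applied to `Eᶜ` this gives `Q Eᶜ ≥ Q A = Φ (t - √s)`.
-/

open scoped NNReal ENNReal

lemma withDensity_apply_le_of_threshold {Ω : Type*} [MeasurableSpace Ω] {P : Measure Ω}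
    [IsFiniteMeasure P] {L : Ω → ℝ≥0∞} (hL : Measurable L) {A B : Set Ω} (hA : MeasurableSet A)
    (hB : MeasurableSet B) {κ : ℝ≥0∞} (hL_le : ∀ x ∈ A, L x ≤ κ) (hL_ge : ∀ x ∉ A, κ ≤ L x)
    (hAB : P A ≤ P B) :
    P.withDensity L A ≤ P.withDensity L B := by
  have h_diff : P (A \ B) ≤ P (B \ A) := by
    rw [← measure_inter_add_sdiff A hB, ← measure_inter_add_sdiff B hA, Set.inter_comm] at hAB
    exact (ENNReal.add_le_add_iff_left (measure_ne_top _ _)).mp hAB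
  calc P.withDensity L A = P.withDensity L (A ∩ B) + P.withDensity L (A \ B) :=
        (measure_inter_add_sdiff A hB).symm
    _ ≤ P.withDensity L (A ∩ B) + κ * P (A \ B) := by
        gcongr
        rw [withDensity_apply _ (hA.diff hB), ← setLIntegral_const]
        exact setLIntegral_mono measurable_const fun x hx => hL_le x hx.1
    _ ≤ P.withDensity L (B ∩ A) + P.withDensity L (B \ A) := by
        rw [Set.inter_comm]
        gcongr
        calc κ * P (A \ B) ≤ κ * P (B \ A) := by gcongr
          _ ≤ P.withDensity L (B \ A) := by
            rw [withDensity_apply _ (hB.diff hA), ← setLIntegral_const]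
            exact setLIntegral_mono hL fun x hx => hL_ge x hx.2
    _ = P.withDensity L B := measure_inter_add_sdiff B hA

lemma gaussianReal_Iic_toReal (m : ℝ) {v : ℝ≥0} (hv : v ≠ 0) (x : ℝ) :
    (gaussianReal m v (Set.Iic x)).toReal = stdGaussCDF ((x - m) / √v) := by
  have hσ : 0 < √(v : ℝ) := sqrt_pos.mpr (by positivity)
  have h_affine : gaussianReal m v = ((gaussianReal 0 1).map (√v * ·)).map (· + m) := by
    rw [gaussianReal_map_const_mul, gaussianReal_map_add_const]
    congr
    · simp
    · ext; simp [sq_sqrt v.coe_nonneg]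
  have h_preimage : ((· + m) ∘ (√v * ·)) ⁻¹' Set.Iic x = Set.Iic ((x - m) / √v) := by
    ext y
    simp [le_div_iff₀ hσ, le_sub_iff_add_le, mul_comm]
  rw [h_affine, Measure.map_map (by fun_prop) (by fun_prop),
    Measure.map_apply (by fun_prop) measurableSet_Iic, h_preimage, stdGaussCDF, cdf_eq_real,
    measureReal_def]

lemma gaussianReal_eq_withDensity_exp (m : ℝ) {v : ℝ≥0} (hv : v ≠ 0) :
    gaussianReal m v = (gaussianReal 0 v).withDensity
      (fun x => ENNReal.ofReal (exp (m * x / v - m ^ 2 / (2 * v)))) := by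
  rw [gaussianReal_of_var_ne_zero m hv, gaussianReal_of_var_ne_zero 0 hv,
    ← withDensity_mul _ (measurable_gaussianPDF 0 v) (by fun_prop)]
  congr 1 with x
  rw [Pi.mul_apply, gaussianPDF, gaussianPDF, ← ENNReal.ofReal_mul (gaussianPDFReal_nonneg _ _ _),
    gaussianPDFReal, gaussianPDFReal, mul_assoc _ (exp _), ← exp_add]
  congr 3
  field_simp
  ring

section Pi

variable {ι : Type*} [Fintype ι]

lemma map_pi_gaussianReal_sum_mul (m : ι → ℝ) (v : ι → ℝ≥0) (a : ι → ℝ) :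
    (Measure.pi fun i => gaussianReal (m i) (v i)).map (fun x => ∑ i, a i * x i)
      = gaussianReal (∑ i, a i * m i) (∑ i, ‖a i‖₊ ^ 2 * v i) := by
  set ν := Measure.pi fun i => gaussianReal (m i) (v i)
  have hS : Measurable fun x : ι → ℝ => ∑ i, a i * x i := by fun_prop
  refine Measure.ext_of_charFun (funext fun u => ?_)
  rw [charFun_apply_real, integral_map hS.aemeasurable (by fun_prop)]
  calc ∫ x, Complex.exp (u * ↑(∑ i, a i * x i) * Complex.I) ∂ν
      = ∫ x, ∏ i, Complex.exp ((u * a i : ℝ) * x i * Complex.I) ∂ν := by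
        refine integral_congr_ae (ae_of_all _ fun x => ?_)
        simp only [← Complex.exp_sum, Complex.ofReal_sum, Complex.ofReal_mul, Finset.mul_sum,
          Finset.sum_mul, mul_assoc]
    _ = ∏ i, charFun (gaussianReal (m i) (v i)) (u * a i) := by
        rw [integral_fintype_prod_eq_prod (E := fun _ => ℝ)
          (fun i y => Complex.exp ((u * a i : ℝ) * y * Complex.I))]
        simp only [charFun_apply_real]
    _ = _ := by
        simp only [charFun_gaussianReal, ← Complex.exp_sum]
        congr 1
        simp only [Complex.ofReal_mul, Complex.ofReal_sum, NNReal.coe_sum, NNReal.coe_mul,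
          NNReal.coe_pow, coe_nnnorm, norm_eq_abs, sq_abs, Complex.ofReal_pow, Finset.mul_sum,
          Finset.sum_mul, Finset.sum_div, ← Finset.sum_sub_distrib]
        exact Finset.sum_congr rfl fun i _ => by ring

lemma pi_gaussianReal_sum_mul_Iic_toReal (m a : ι → ℝ) (ha : 0 < ∑ i, a i ^ 2) (c : ℝ) :
    (Measure.pi (fun i => gaussianReal (m i) 1)
        ((fun x => ∑ i, a i * x i) ⁻¹' Set.Iic c)).toReal
      = stdGaussCDF ((c - ∑ i, a i * m i) / √(∑ i, a i ^ 2)) := by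
  have hv : ((∑ i, ‖a i‖₊ ^ 2 : ℝ≥0) : ℝ) = ∑ i, a i ^ 2 := by simp
  rw [← Measure.map_apply (by fun_prop) measurableSet_Iic, map_pi_gaussianReal_sum_mul]
  simp_rw [mul_one]
  rw [gaussianReal_Iic_toReal _ (by rw [← NNReal.coe_ne_zero, hv]; exact ha.ne'), hv]

variable {α : ι → Type*} [∀ i, MeasurableSpace (α i)]
  {ν : ∀ i, Measure (α i)} [∀ i, IsProbabilityMeasure (ν i)]

lemma lintegral_pi_prod_eq_prod {f : ∀ i, α i → ℝ≥0∞} (hf : ∀ i, Measurable (f i)) :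
    ∫⁻ x, ∏ i, f i (x i) ∂Measure.pi ν = ∏ i, ∫⁻ y, f i y ∂ν i := by
  rw [lintegral_prod_eq_prod_lintegral_of_indepFun _ _
      (iIndepFun_pi fun i => (hf i).aemeasurable) fun i => (hf i).comp (measurable_pi_apply i)]
  exact Finset.prod_congr rfl fun i _ => (measurePreserving_eval ν i).lintegral_comp (hf i)

lemma Measure.pi_withDensity {ℓ : ∀ i, α i → ℝ≥0∞} (hℓ : ∀ i, Measurable (ℓ i))
    (hℓ_ne_top : ∀ i y, ℓ i y ≠ ∞) :
    Measure.pi (fun i => (ν i).withDensity (ℓ i))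
      = (Measure.pi ν).withDensity (fun x => ∏ i, ℓ i (x i)) := by
  have (i : ι) : SigmaFinite ((ν i).withDensity (ℓ i)) :=
    SigmaFinite.withDensity_of_ne_top' (hℓ_ne_top i)
  refine Measure.pi_eq fun s hs => ?_
  rw [withDensity_apply _ (MeasurableSet.univ_pi hs),
    ← lintegral_indicator (MeasurableSet.univ_pi hs)]
  have h_indicator : (Set.univ.pi s).indicator (fun x => ∏ i, ℓ i (x i))
      = fun x => ∏ i, (s i).indicator (ℓ i) (x i) := by
    classical
    ext x
    simp [Set.indicator_apply, Finset.prod_ite_zero]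
  rw [h_indicator, lintegral_pi_prod_eq_prod fun i => (hℓ i).indicator (hs i)]
  exact Finset.prod_congr rfl fun i _ => by
    rw [lintegral_indicator (hs i), withDensity_apply _ (hs i)]

end Pi

lemma pi_gaussianReal_eq_withDensity {ι : Type*} [Fintype ι] (m : ι → ℝ) :
    Measure.pi (fun i => gaussianReal (m i) 1)
      = (Measure.pi fun _ : ι => gaussianReal 0 1).withDensity
          (fun x => ENNReal.ofReal (exp (∑ i, m i * x i - (∑ i, m i ^ 2) / 2))) := by
  conv_lhs => enter [1, i]; rw [gaussianReal_eq_withDensity_exp _ one_ne_zero]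
  rw [Measure.pi_withDensity (fun i => by fun_prop) fun _ _ => ENNReal.ofReal_ne_top]
  congr 1 with x
  rw [← ENNReal.ofReal_prod_of_nonneg fun i _ => (exp_pos _).le, ← exp_sum,
    Finset.sum_sub_distrib, Finset.sum_div]
  simp only [NNReal.coe_one, div_one, mul_one]

theorem stmt_14_general (T : ℕ) (μ : Fin T → ℝ) (α t : ℝ)
    (ht : stdGaussCDF t = 1 - α) :
    ∀ E : Set (Fin T → ℝ), MeasurableSet E →
      (Measure.pi (fun _ : Fin T => gaussianReal 0 1) E).toReal ≤ α →
      (Measure.pi (fun i : Fin T => gaussianReal (μ i) 1) Eᶜ).toReal ≥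
        stdGaussCDF (t - Real.sqrt (∑ i, (μ i) ^ 2)) := by
  intro E hE hPE
  set P := Measure.pi fun _ : Fin T => gaussianReal 0 1
  set Q := Measure.pi fun i : Fin T => gaussianReal (μ i) 1
  set s := ∑ i, μ i ^ 2 with hs_def
  have hPEc : 1 - α ≤ (P Eᶜ).toReal := by
    rw [← measureReal_def, probReal_compl_eq_one_sub hE, measureReal_def]
    linarith
  rcases (Finset.sum_nonneg fun i _ => sq_nonneg (μ i) : 0 ≤ s).eq_or_lt with hs | hs
  · have hμ : μ = 0 := funext fun i => by
      simpa using (Finset.sum_eq_zero_iff_of_nonneg fun j _ => sq_nonneg (μ j)).mp hs.symm i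
    have hQP : Q = P := by simp [Q, P, hμ]
    rw [show s = 0 from hs.symm, sqrt_zero, sub_zero, ht, hQP]
    exact hPEc
  have hσ : 0 < √s := sqrt_pos.mpr hs
  set A := (fun x : Fin T → ℝ => ∑ i, μ i * x i) ⁻¹' Set.Iic (t * √s)
  have hPA : (P A).toReal = 1 - α := by
    rw [pi_gaussianReal_sum_mul_Iic_toReal (fun _ => 0) μ hs, ← hs_def]
    simp only [mul_zero, Finset.sum_const_zero, sub_zero]
    rw [mul_div_cancel_right₀ _ hσ.ne', ht]
  have hQA : (Q A).toReal = stdGaussCDF (t - √s) := by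
    rw [pi_gaussianReal_sum_mul_Iic_toReal μ μ hs]
    simp only [← sq]
    rw [sub_div, mul_div_cancel_right₀ _ hσ.ne', div_sqrt]
  have hNP : Q A ≤ Q Eᶜ := by
    rw [show Q = _ from pi_gaussianReal_eq_withDensity μ]
    refine withDensity_apply_le_of_threshold (by fun_prop)
      (measurableSet_Iic.preimage (by fun_prop)) hE.compl
      (κ := ENNReal.ofReal (exp (t * √s - s / 2))) (fun x hx => ?_) (fun x hx => ?_) ?_
    · gcongr
      exact hx
    · gcongr
      exact (not_le.mp hx).le
    · rwa [← ENNReal.toReal_le_toReal (measure_ne_top _ _) (measure_ne_top _ _), hPA]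
  exact hQA ▸ ENNReal.toReal_mono (measure_ne_top _ _) hNP

theorem stmt_14 (T : ℕ) (μ : Fin T → ℝ) (α t : ℝ)
    (hα : α ∈ Set.Ioo (0 : ℝ) 1) (ht : stdGaussCDF t = 1 - α) :
    ∀ E : Set (Fin T → ℝ), MeasurableSet E →
      (Measure.pi (fun _ : Fin T => gaussianReal 0 1) E).toReal ≤ α →
      (Measure.pi (fun i : Fin T => gaussianReal (μ i) 1) Eᶜ).toReal ≥
        stdGaussCDF (t - Real.sqrt (∑ i, (μ i) ^ 2)) :=
  stmt_14_general T μ α t ht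
end
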